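/- With the polynomials A_{m,i} as defined by the recursion above, for all m ≥ 1 and 0 ≤ i ≤ r one has A_{m,m+i} ≡ φ^m(z^{(i)}) modulo the ideal generated by w, w', …, w^{(m−1)}; and for 0 ≤ i ≤ m−1 one has A_{m,i} ≡ 0 modulo the same ideal. -/

import Mathlib

/-!
Write `I m` for the ideal generated by `w, w', …, w⁽ᵐ⁻¹⁾`. Since `φ(w⁽ʲ⁾) = (w⁽ʲ⁾)ᵖ + p w⁽ʲ⁺¹⁾`,
the Frobenius lift `φ` maps `I m` into `I (m + 1)`. Each row `A_{m+1,·}` of the recursion is `φ`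
applied to the shifted row `A_{m,·}`, up to multiples of `(w⁽ᵐ⁾)ᵖ⁻¹ ∈ I (m + 1)`, so both
congruences propagate from `m` to `m + 1`; at `m = 0` they hold trivially because `I 0 = 0`.
-/

open MvPolynomial

section SpanBelow

variable {R : Type*} [CommRing R] (w : ℕ → R)

def spanBelow (m : ℕ) : Ideal R := Ideal.span (w '' Set.Iio m)

variable {w}

@[simp]
theorem spanBelow_zero : spanBelow w 0 = ⊥ := by
  simp [spanBelow]

theorem mem_spanBelow {j m : ℕ} (h : j < m) : w j ∈ spanBelow w m :=
  Ideal.subset_span ⟨j, h, rfl⟩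

theorem spanBelow_le_spanBelow_succ (m : ℕ) : spanBelow w m ≤ spanBelow w (m + 1) :=
  Ideal.span_mono <| Set.image_mono <| Set.Iio_subset_Iio m.le_succ

theorem pow_mem_spanBelow_succ {n : ℕ} (hn : n ≠ 0) (m : ℕ) : w m ^ n ∈ spanBelow w (m + 1) :=
  Ideal.pow_mem_of_mem _ (mem_spanBelow m.lt_succ_self) n (Nat.pos_of_ne_zero hn)

theorem spanBelow_le_comap_succ {p : ℕ} (hp : p ≠ 0) {φ : R →+* R} {δ : R → R}
    (hφδ : ∀ F, φ F = F ^ p + p * δ F) (hw : ∀ j, δ (w j) = w (j + 1)) (m : ℕ) :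
    spanBelow w m ≤ (spanBelow w (m + 1)).comap φ := by
  rw [spanBelow, Ideal.span_le]
  rintro _ ⟨j, hj, rfl⟩
  have hj : j < m := hj
  rw [SetLike.mem_coe, Ideal.mem_comap, hφδ, hw]
  exact add_mem (spanBelow_le_spanBelow_succ m (Ideal.pow_mem_of_mem _ (mem_spanBelow hj) p
    (Nat.pos_of_ne_zero hp))) (Ideal.mul_mem_left _ _ (mem_spanBelow (by omega)))

end SpanBelow

section Recursion

variable {R : Type*} [CommRing R] {w : ℕ → R} {φ : R →+* R} {p r : ℕ} {A : ℕ → ℕ → R}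

theorem rec_sub_map_mem_spanBelow (hp : 2 ≤ p)
    (hArec : ∀ m i : ℕ, 1 ≤ i → i ≤ m + r → A (m + 1) i = φ (A m (i - 1)) - w m ^ (p - 1) * A m i)
    (hArecTop : ∀ m : ℕ, A (m + 1) (m + r + 1) = φ (A m (m + r)))
    {m k : ℕ} (hk₁ : 1 ≤ k) (hk₂ : k ≤ m + r + 1) :
    A (m + 1) k - φ (A m (k - 1)) ∈ spanBelow w (m + 1) := by
  rcases hk₂.lt_or_eq with hk₂ | rfl
  · rw [hArec m k hk₁ (by omega), sub_sub_cancel_left]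
    exact neg_mem (Ideal.mul_mem_right _ _ (pow_mem_spanBelow_succ (by omega) m))
  · rw [hArecTop m, Nat.add_sub_cancel, sub_self]
    exact zero_mem _

theorem rec_congr_spanBelow (hp : 2 ≤ p)
    (hφ : ∀ m, spanBelow w m ≤ (spanBelow w (m + 1)).comap φ)
    (hArec0 : ∀ m : ℕ, A (m + 1) 0 = -(w m) ^ (p - 1) * A m 0)
    (hArec : ∀ m i : ℕ, 1 ≤ i → i ≤ m + r → A (m + 1) i = φ (A m (i - 1)) - w m ^ (p - 1) * A m i)
    (hArecTop : ∀ m : ℕ, A (m + 1) (m + r + 1) = φ (A m (m + r))) (m : ℕ) :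
    (∀ i ≤ r, A m (m + i) - φ^[m] (A 0 i) ∈ spanBelow w m) ∧
      ∀ i < m, A m i ∈ spanBelow w m := by
  induction m with
  | zero => simp
  | succ m ih =>
    obtain ⟨ih_diag, ih_low⟩ := ih
    have hstep : ∀ k, 1 ≤ k → k ≤ m + r + 1 →
        A (m + 1) k - φ (A m (k - 1)) ∈ spanBelow w (m + 1) :=
      fun _ => rec_sub_map_mem_spanBelow hp hArec hArecTop
    refine ⟨fun i hi => ?_, fun i hi => ?_⟩
    · have hdiff := hφ m (ih_diag i hi)
      rw [Ideal.mem_comap, map_sub] at hdiff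
      have := add_mem (hstep (m + 1 + i) (by omega) (by omega)) hdiff
      rwa [show m + 1 + i - 1 = m + i by omega, sub_add_sub_cancel,
        ← Function.iterate_succ_apply' φ] at this
    · rcases Nat.eq_zero_or_pos i with rfl | hi₀
      · rw [hArec0 m]
        exact Ideal.mul_mem_right _ _ (neg_mem (pow_mem_spanBelow_succ (by omega) m))
      · simpa only [sub_add_cancel] using
          add_mem (hstep i hi₀ (by omega)) (hφ m (ih_low (i - 1) (by omega)))

end Recursion

/-- With `A_{m,i}` as defined by the recursion, for all `m ≥ 1` and `0 ≤ i ≤ r` one has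
`A_{m,m+i} ≡ φᵐ(z⁽ⁱ⁾)` modulo the ideal generated by `w, w', …, w⁽ᵐ⁻¹⁾`, and
`A_{m,i} ≡ 0` modulo the same ideal for `0 ≤ i ≤ m−1`. -/
theorem A_m_congruences_mod_w (p r : ℕ) (hp : p.Prime)
    (φ : MvPolynomial (Fin (r + 1) × ℕ ⊕ ℕ) ℤ →+* MvPolynomial (Fin (r + 1) × ℕ ⊕ ℕ) ℤ)
    (δ : MvPolynomial (Fin (r + 1) × ℕ ⊕ ℕ) ℤ → MvPolynomial (Fin (r + 1) × ℕ ⊕ ℕ) ℤ)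
    (hφδ : ∀ F, φ F = F ^ p + p * δ F)
    (hw : ∀ j : ℕ, δ (X (Sum.inr j)) = X (Sum.inr (j + 1)))
    (A : ℕ → ℕ → MvPolynomial (Fin (r + 1) × ℕ ⊕ ℕ) ℤ)
    (hA0 : ∀ i : ℕ, ∀ h : i ≤ r, A 0 i = X (Sum.inl (⟨i, by omega⟩, 0)))
    (hArec0 : ∀ m : ℕ, A (m + 1) 0 = -(X (Sum.inr m)) ^ (p - 1) * A m 0)
    (hArec : ∀ m i : ℕ, 1 ≤ i → i ≤ m + r →
      A (m + 1) i = φ (A m (i - 1)) - (X (Sum.inr m)) ^ (p - 1) * A m i)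
    (hArecTop : ∀ m : ℕ, A (m + 1) (m + r + 1) = φ (A m (m + r))) :
    ∀ m : ℕ, 1 ≤ m →
      (∀ i : Fin (r + 1), A m (m + (i : ℕ)) - (⇑φ)^[m] (X (Sum.inl (i, 0))) ∈
        Ideal.span ((fun j : ℕ => (X (Sum.inr j) :
          MvPolynomial (Fin (r + 1) × ℕ ⊕ ℕ) ℤ)) '' Set.Iio m)) ∧
      (∀ i : ℕ, i < m → A m i ∈
        Ideal.span ((fun j : ℕ => (X (Sum.inr j) :
          MvPolynomial (Fin (r + 1) × ℕ ⊕ ℕ) ℤ)) '' Set.Iio m)) := by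
  intro m _
  have hφ := spanBelow_le_comap_succ hp.ne_zero hφδ hw
  obtain ⟨hdiag, hlow⟩ := rec_congr_spanBelow hp.two_le hφ hArec0 hArec hArecTop m
  refine ⟨fun i => ?_, hlow⟩
  have hi := hdiag i i.is_le
  rw [hA0 i i.is_le] at hi
  exact hi
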